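/- Let q be an integral quadratic form of signature (1,n) on a lattice L with n ≥ 2, and suppose L contains a nonzero isotropic vector. Then L contains infinitely many primitive isotropic vectors, lying on infinitely many distinct isotropic lines. -/

import Mathlib

/-!
Starting from one isotropic vector `v`, pick `w` with `B v w ≠ 0` (nondegeneracy) and `x`
independent of `v, w` (this needs rank at least three). For every integer `k`, the line through `v`
in direction `u = w + k • x` meets the null cone a second time, at `-B u u • v + 2 B v u • u`, an
integral isotropic vector whose `w`- and `x`-coordinates are in the ratio `1 : k`. These vectors
are pairwise non-proportional, so they span infinitely many lines, and their primitive parts are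
infinitely many primitive isotropic vectors.
-/

lemma exists_eq_zsmul_primitive {L : Type*} [AddCommGroup L] [Module.Free ℤ L]
    {z : L} (hz : z ≠ 0) :
    ∃ (d : ℤ) (p : L), d ≠ 0 ∧ z = d • p ∧ ∀ (w : L) (m : ℤ), p = m • w → IsUnit m := by
  classical
  let b := Module.Free.chooseBasis ℤ L
  set g := (b.repr z).support.gcd (b.repr z)
  have hg : ∀ i, g ∣ b.repr z i := fun i => by
    by_cases hi : i ∈ (b.repr z).support
    · exact Finset.gcd_dvd hi
    · simp [Finsupp.notMem_support_iff.mp hi]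
  have hg0 : g ≠ 0 := fun h => hz <| b.repr.map_eq_zero_iff.mp <|
    Finsupp.ext fun i => zero_dvd_iff.mp (h ▸ hg i)
  let c : _ →₀ ℤ := (b.repr z).mapRange (· / g) (Int.zero_ediv g)
  have hzc : z = g • b.repr.symm c := by
    rw [← map_zsmul, eq_comm, LinearEquiv.symm_apply_eq]
    ext i
    simp [c, Int.mul_ediv_cancel' (hg i)]
  refine ⟨g, _, hg0, hzc, fun w m hpw => ?_⟩
  have hgm : g * m ∣ g * 1 := by
    rw [mul_one]
    refine Finset.dvd_gcd fun i _ => ⟨b.repr w i, ?_⟩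
    rw [hzc, hpw, smul_smul]
    simp [mul_assoc]
  exact isUnit_of_dvd_one ((mul_dvd_mul_iff_left hg0).mp hgm)

def lorentzForm (n : ℕ) : LinearMap.BilinForm ℝ (Fin (n + 1) → ℝ) :=
  Matrix.toBilin' (Matrix.diagonal (Fin.cons 1 fun _ => -1))

lemma lorentzForm_apply (n : ℕ) (a u : Fin (n + 1) → ℝ) :
    lorentzForm n a u = a 0 * u 0 - ∑ i : Fin n, a i.succ * u i.succ := by
  simp [lorentzForm, Matrix.toBilin'_apply', dotProduct, Fin.sum_univ_succ,
    Matrix.mulVec_diagonal, sub_eq_add_neg]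

lemma lorentzForm_nondegenerate (n : ℕ) : (lorentzForm n).Nondegenerate :=
  LinearMap.BilinForm.nondegenerate_toBilin'_of_det_ne_zero' _ <| by
    simp [Matrix.det_diagonal, Fin.prod_univ_succ]

section NullCone

variable {R M : Type*} [CommRing R] [AddCommGroup M] [Module R M] (B : M →ₗ[R] M →ₗ[R] R)

/-- The second point where the line `t ↦ v + t • u` through an isotropic `v` meets the null cone
of `B`, at `t = -2 B v u / B u u`, scaled by `-B u u` to clear the denominator. -/
def nullConeSecant (v u : M) : M :=
  (-B u u) • v + (2 * B v u) • u

lemma nullConeSecant_isotropic {v u : M} (hv : B v v = 0) (hvu : B u v = B v u) :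
    B (nullConeSecant B v u) (nullConeSecant B v u) = 0 := by
  simp only [nullConeSecant, map_add, map_smul, LinearMap.add_apply, LinearMap.smul_apply,
    smul_eq_mul, hv, hvu]
  ring

variable [IsDomain R] {B} {v w x : M}

lemma setOf_apply_add_smul_eq_zero_subsingleton (hvw : B v w ≠ 0) (x : M) :
    {k : R | B v (w + k • x) = 0}.Subsingleton := by
  intro k₁ (h₁ : B v (w + k₁ • x) = 0) k₂ (h₂ : B v (w + k₂ • x) = 0)
  simp only [map_add, map_smul, smul_eq_mul] at h₁ h₂
  have hvx : B v x ≠ 0 := fun h => hvw (by simpa [h] using h₁)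
  have : (k₁ - k₂) * B v x = 0 := by linear_combination h₁ - h₂
  exact sub_eq_zero.mp ((mul_eq_zero.mp this).resolve_right hvx)

variable [NeZero (2 : R)]

lemma nullConeSecant_add_smul_ne_zero (hind : LinearIndependent R ![x, v, w]) {k : R}
    (hk : B v (w + k • x) ≠ 0) : nullConeSecant B v (w + k • x) ≠ 0 := by
  intro h0
  unfold nullConeSecant at h0
  have hw := Fintype.linearIndependent_iff.mp hind
    ![k * (2 * B v (w + k • x)), -B (w + k • x) (w + k • x), 2 * B v (w + k • x)]
    (by simp only [Fin.sum_univ_three, Matrix.cons_val]; linear_combination (norm := module) h0) 2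
  simp only [Matrix.cons_val] at hw
  exact hk ((mul_eq_zero.mp hw).resolve_left two_ne_zero)

lemma eq_of_smul_nullConeSecant_add_smul_eq (hind : LinearIndependent R ![x, v, w])
    {k k' a b : R} (hk : B v (w + k • x) ≠ 0) (ha : a ≠ 0)
    (h : a • nullConeSecant B v (w + k • x) = b • nullConeSecant B v (w + k' • x)) : k = k' := by
  unfold nullConeSecant at h
  set c := B v (w + k • x)
  set c' := B v (w + k' • x)
  have hcoeff := Fintype.linearIndependent_iffₛ.mp hind
    ![a * (2 * c) * k, -(a * B (w + k • x) (w + k • x)), a * (2 * c)]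
    ![b * (2 * c') * k', -(b * B (w + k' • x) (w + k' • x)), b * (2 * c')]
    (by simp only [Fin.sum_univ_three, Matrix.cons_val]; linear_combination (norm := module) h)
  have hx := hcoeff 0
  have hw := hcoeff 2
  simp only [Matrix.cons_val] at hx hw
  have : (a * (2 * c)) * (k - k') = 0 := by linear_combination hx - k' * hw
  have hac : a * (2 * c) ≠ 0 := mul_ne_zero ha (mul_ne_zero two_ne_zero hk)
  exact sub_eq_zero.mp ((mul_eq_zero.mp this).resolve_left hac)

end NullCone

lemma linearIndependent_pair_of_isotropic {K V : Type*} [Field K] [AddCommGroup V] [Module K V]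
    {β : V →ₗ[K] V →ₗ[K] K} {a b : V} (ha : β a a = 0) (hab : β a b ≠ 0) :
    LinearIndependent K ![a, b] := by
  refine LinearIndependent.pair_iff.mpr fun s t hst => ?_
  have ht : t = 0 := by
    have := congrArg (β a) hst
    simp only [map_add, map_smul, smul_eq_mul, ha, map_zero] at this
    simpa [hab] using this
  subst ht
  have ha0 : a ≠ 0 := by rintro rfl; simp at hab
  simpa [ha0] using hst

section Lattice

variable {L V : Type*} [AddCommGroup L] [AddCommGroup V] [Module ℝ V] {ι : L →ₗ[ℤ] V}

lemma separatingLeft_of_embedding {B : L →ₗ[ℤ] L →ₗ[ℤ] ℤ} {β : LinearMap.BilinForm ℝ V}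
    (hβ : β.SeparatingLeft) (hinj : Function.Injective ι)
    (hspan : Submodule.span ℝ (Set.range ι) = ⊤) (hB : ∀ x y, (B x y : ℝ) = β (ι x) (ι y)) :
    B.SeparatingLeft := by
  intro v hv
  have : β (ι v) = 0 := LinearMap.ext_on_range hspan fun y => by simp [← hB, hv]
  exact hinj (by rw [map_zero]; exact hβ _ fun u => by simp [this])

lemma exists_linearIndependent_triple (hspan : Submodule.span ℝ (Set.range ι) = ⊤)
    (hdim : 2 < Module.finrank ℝ V) {v w : L} (hvw : LinearIndependent ℝ ![ι v, ι w]) :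
    ∃ x, LinearIndependent ℤ ![x, v, w] := by
  obtain ⟨x, hx⟩ : ∃ x, ι x ∉ Submodule.span ℝ (Set.range ![ι v, ι w]) := by
    by_contra! h
    have htop : Submodule.span ℝ (Set.range ![ι v, ι w]) = ⊤ :=
      top_unique (hspan ▸ Submodule.span_le.mpr (Set.range_subset_iff.mpr h))
    have := finrank_range_le_card (R := ℝ) ![ι v, ι w]
    rw [Set.finrank, htop, finrank_top] at this
    simp at this
    omega
  have hR : LinearIndependent ℝ (ι ∘ ![x, v, w]) := by
    rw [show ι ∘ ![x, v, w] = ![ι x, ι v, ι w] by ext i; fin_cases i <;> rfl]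
    exact linearIndependent_finCons.mpr ⟨hvw, hx⟩
  exact ⟨x, (hR.restrict_scalars' ℤ).of_comp ι⟩

end Lattice

section Infinitude

variable {K L : Type*} [AddCommGroup L] {B : L →ₗ[ℤ] L →ₗ[ℤ] ℤ} {S : Set K} {f : K → L}

lemma infinite_setOf_primitive_isotropic [Module.Free ℤ L] (hS : S.Infinite)
    (hf0 : ∀ k ∈ S, f k ≠ 0) (hiso : ∀ k ∈ S, B (f k) (f k) = 0)
    (hprop : ∀ k ∈ S, ∀ k' ∈ S, ∀ a b : ℤ, a ≠ 0 → a • f k = b • f k' → k = k') :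
    {v : L | B v v = 0 ∧ ∀ (w : L) (m : ℤ), v = m • w → IsUnit m}.Infinite := by
  choose! d P hd hfP hP using fun k (hk : k ∈ S) => exists_eq_zsmul_primitive (hf0 k hk)
  refine Set.infinite_of_injOn_mapsTo (f := P) (fun k hk k' hk' hPP => ?_) (fun k hk => ?_) hS
  · refine hprop k hk k' hk' (d k') (d k) (hd k' hk') ?_
    rw [hfP k hk, hfP k' hk', hPP, smul_smul, smul_smul, mul_comm]
  · have := hiso k hk
    rw [hfP k hk] at this
    simp only [map_zsmul, LinearMap.smul_apply, smul_eq_mul, mul_eq_zero, hd k hk, false_or] at this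
    exact ⟨this, hP k hk⟩

lemma infinite_setOf_isotropic_lines (hS : S.Infinite) (hf0 : ∀ k ∈ S, f k ≠ 0)
    (hiso : ∀ k ∈ S, B (f k) (f k) = 0)
    (hprop : ∀ k ∈ S, ∀ k' ∈ S, ∀ a b : ℤ, a ≠ 0 → a • f k = b • f k' → k = k') :
    {ℓ : Submodule ℤ L | ∃ v : L, v ≠ 0 ∧ B v v = 0 ∧ ℓ = Submodule.span ℤ {v}}.Infinite := by
  refine Set.infinite_of_injOn_mapsTo (f := fun k => Submodule.span ℤ {f k})
    (fun k hk k' hk' (hspan : Submodule.span ℤ {f k} = Submodule.span ℤ {f k'}) => ?_)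
    (fun k hk => ⟨f k, hf0 k hk, hiso k hk, rfl⟩) hS
  have hmem : f k ∈ Submodule.span ℤ {f k'} := by
    rw [← hspan]
    exact Submodule.mem_span_singleton_self (f k)
  obtain ⟨m, hm⟩ := Submodule.mem_span_singleton.mp hmem
  exact hprop k hk k' hk' 1 m one_ne_zero (by rw [one_smul, hm])

lemma infinite_setOf_primitive_isotropic_and_lines [Module.Free ℤ L]
    (hsymm : ∀ x y, B x y = B y x) {v w x : L} (hvv : B v v = 0) (hvw : B v w ≠ 0)
    (hind : LinearIndependent ℤ ![x, v, w]) :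
    {v : L | B v v = 0 ∧ ∀ (w : L) (m : ℤ), v = m • w → IsUnit m}.Infinite ∧
    {ℓ : Submodule ℤ L | ∃ v : L, v ≠ 0 ∧ B v v = 0 ∧ ℓ = Submodule.span ℤ {v}}.Infinite := by
  set S : Set ℤ := {k | B v (w + k • x) ≠ 0}
  have hS : S.Infinite := (setOf_apply_add_smul_eq_zero_subsingleton hvw x).finite.infinite_compl
  have hf0 : ∀ k ∈ S, nullConeSecant B v (w + k • x) ≠ 0 := fun k hk =>
    nullConeSecant_add_smul_ne_zero hind hk
  have hiso : ∀ k ∈ S, B (nullConeSecant B v (w + k • x)) (nullConeSecant B v (w + k • x)) = 0 :=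
    fun k _ => nullConeSecant_isotropic B hvv (hsymm _ _)
  have hprop : ∀ k ∈ S, ∀ k' ∈ S, ∀ a b : ℤ, a ≠ 0 →
      a • nullConeSecant B v (w + k • x) = b • nullConeSecant B v (w + k' • x) → k = k' :=
    fun _ hk _ _ _ _ ha h => eq_of_smul_nullConeSecant_add_smul_eq hind hk ha h
  exact ⟨infinite_setOf_primitive_isotropic hS hf0 hiso hprop,
    infinite_setOf_isotropic_lines hS hf0 hiso hprop⟩

end Infinitude

theorem infinitely_many_isotropic_lines_general (n : ℕ) (hn : 2 ≤ n)
    (L : Type*) [AddCommGroup L] [Module ℤ L] [Module.Free ℤ L]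
    (B : L →ₗ[ℤ] L →ₗ[ℤ] ℤ) (hsymm : ∀ x y, B x y = B y x)
    (ι : L →ₗ[ℤ] (Fin (n+1) → ℝ)) (hinj : Function.Injective ι)
    (hspan : Submodule.span ℝ (Set.range ι) = ⊤)
    (hcompat : ∀ x y : L, (B x y : ℝ) =
      ι x 0 * ι y 0 - ∑ i : Fin n, ι x i.succ * ι y i.succ)
    (hiso : ∃ v : L, v ≠ 0 ∧ B v v = 0) :
    {v : L | B v v = 0 ∧ ∀ (w : L) (m : ℤ), v = m • w → IsUnit m}.Infinite ∧
    {ℓ : Submodule ℤ L | ∃ v : L, v ≠ 0 ∧ B v v = 0 ∧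
      ℓ = Submodule.span ℤ {v}}.Infinite := by
  -- the integer action `m • w` in the statement is `zsmul`, the canonical `ℤ`-module structure
  obtain rfl := Subsingleton.elim ‹Module ℤ L› (AddCommGroup.toIntModule L)
  have hB : ∀ x y, (B x y : ℝ) = lorentzForm n (ι x) (ι y) := fun x y => by
    rw [lorentzForm_apply, hcompat]
  obtain ⟨v, hv0, hvv⟩ := hiso
  obtain ⟨w, hvw⟩ : ∃ w, B v w ≠ 0 := by
    by_contra! h
    exact hv0 (separatingLeft_of_embedding (lorentzForm_nondegenerate n).1 hinj hspan hB v h)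
  obtain ⟨x, hind⟩ := exists_linearIndependent_triple hspan (by simp; omega) <|
    linearIndependent_pair_of_isotropic (β := lorentzForm n)
      (by rw [← hB, hvv, Int.cast_zero]) (by rwa [← hB, Int.cast_ne_zero])
  exact infinite_setOf_primitive_isotropic_and_lines hsymm hvv hvw hind

/-- a lattice of signature (1,n), n ≥ 2, containing a nonzero isotropic
vector contains infinitely many primitive isotropic vectors, lying on infinitely many
distinct isotropic lines. -/
theorem infinitely_many_isotropic_lines (n : ℕ) (hn : 2 ≤ n)
    (L : Type*) [AddCommGroup L] [Module ℤ L] [Module.Free ℤ L] [Module.Finite ℤ L]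
    (B : L →ₗ[ℤ] L →ₗ[ℤ] ℤ) (hsymm : ∀ x y, B x y = B y x)
    (ι : L →ₗ[ℤ] (Fin (n+1) → ℝ)) (hinj : Function.Injective ι)
    (hspan : Submodule.span ℝ (Set.range ι) = ⊤)
    (hcompat : ∀ x y : L, (B x y : ℝ) =
      ι x 0 * ι y 0 - ∑ i : Fin n, ι x i.succ * ι y i.succ)
    (hiso : ∃ v : L, v ≠ 0 ∧ B v v = 0) :
    {v : L | B v v = 0 ∧ ∀ (w : L) (m : ℤ), v = m • w → IsUnit m}.Infinite ∧
    {ℓ : Submodule ℤ L | ∃ v : L, v ≠ 0 ∧ B v v = 0 ∧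
      ℓ = Submodule.span ℤ {v}}.Infinite :=
  infinitely_many_isotropic_lines_general n hn L B hsymm ι hinj hspan hcompat hiso
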